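/- Fix θ > 0 and β ∈ ℝ. Let b, σ, h, k₊, k₋ : ℝ → ℝ satisfy: b, σ are C¹ with σ(x)² > 0 for all x, h is C¹ and positive, k₊, k₋ are C² and positive, and set q(x) = exp(∫₀ˣ 2b(y)/σ(y)² dy) and H₋(x,θ) = (1/2)θσ(x)²k₊(x)² − (1/2)σ(x)²k₊'(x) − b(x)k₊(x) + h(x). Let J ⊂ (−∞,β) be an open interval, λ : J → ℝ a function, and for each α ∈ J let u_α : ℝ → ℝ be twice continuously differentiable on [α,β], strictly positive on [α,β], satisfying (1/2)σ(x)²u_α''(x) + b(x)u_α'(x) + θ(h(x) − λ(α))u_α(x) = 0 for all x ∈ [α,β], the boundary conditions θk₊(α)u_α(α) + u_α'(α) = 0 and θk₋(β)u_α(β) − u_α'(β) = 0, and the normalization ∫_α^β (2θq(y)/σ(y)²)u_α(y)² dy = 1. Assume the maps (α,x) ↦ u_α(x) and (α,x) ↦ u_α'(x) are continuous on {(α,x) : α ∈ J, α ≤ x ≤ β}. Then λ is differentiable on J and λ'(α) = (2θq(α)/σ(α)²) u_α(α)² (λ(α) − H₋(α,θ)) for every α ∈ J. -/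

import Mathlib

/-!
For `α₁ ≤ α₂` the weighted Wronskian `q (u_{α₁} u_{α₂}' - u_{α₂} u_{α₁}')` has derivative
`(λ(α₂) - λ(α₁)) w u_{α₁} u_{α₂}` with `w = 2θq/σ²` (Lagrange's identity), and it vanishes at `β`
by the common boundary condition there. Integrating over `[α₂, β]` and using the boundary
condition of `u_{α₂}` at `α₂` gives
`(λ(α₂) - λ(α₁)) ∫_{α₂}^β w u_{α₁} u_{α₂} = q(α₂) u_{α₂}(α₂) Γ(α₁, α₂)`,
where `Γ(α, x) = u_α'(x) + θ k₊(x) u_α(x)` vanishes on the diagonal. As `(α₁, α₂) → (α, α)` the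
integral tends to the normalisation `1`, so `λ` is continuous at `α`; then, by the mean value
inequality, `Γ(α₁, α₂) / (α₂ - α₁)` tends to `∂ₓΓ(α, α)`, which the equation and the boundary
condition at `α` turn into `w(α) u_α(α)² (λ(α) - H₋(α, θ))`.
-/

open Set intervalIntegral

open Filter Topology

theorem continuousAt_of_tendsto_sub {f : ℝ → ℝ} {x : ℝ}
    (h : Tendsto (fun p : ℝ × ℝ => f p.2 - f p.1) (𝓝[{p | p.1 ≤ p.2}] (x, x)) (𝓝 0)) :
    ContinuousAt f x := by
  have hl : Tendsto (fun a => (a, x)) (𝓝[≤] x) (𝓝[{p : ℝ × ℝ | p.1 ≤ p.2}] (x, x)) :=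
    (Continuous.prodMk_left x).continuousWithinAt.tendsto_nhdsWithin fun _ ha => ha
  have hr : Tendsto (fun a => (x, a)) (𝓝[≥] x) (𝓝[{p : ℝ × ℝ | p.1 ≤ p.2}] (x, x)) :=
    (Continuous.prodMk_right x).continuousWithinAt.tendsto_nhdsWithin fun _ ha => ha
  rw [continuousAt_iff_continuous_left_right]
  constructor
  · have := (h.comp hl).neg
    simp only [Function.comp_def, neg_sub, neg_zero] at this
    exact tendsto_sub_nhds_zero_iff.mp this
  · exact tendsto_sub_nhds_zero_iff.mp (h.comp hr)

theorem hasDerivAt_of_tendsto_div_sub {f : ℝ → ℝ} {x L : ℝ}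
    (h : Tendsto (fun p : ℝ × ℝ => (f p.2 - f p.1) / (p.2 - p.1))
      (𝓝[{p | p.1 < p.2}] (x, x)) (𝓝 L)) :
    HasDerivAt f L x := by
  have hl : Tendsto (fun a => (a, x)) (𝓝[<] x) (𝓝[{p : ℝ × ℝ | p.1 < p.2}] (x, x)) :=
    (Continuous.prodMk_left x).continuousWithinAt.tendsto_nhdsWithin fun _ ha => ha
  have hr : Tendsto (fun a => (x, a)) (𝓝[>] x) (𝓝[{p : ℝ × ℝ | p.1 < p.2}] (x, x)) :=
    (Continuous.prodMk_right x).continuousWithinAt.tendsto_nhdsWithin fun _ ha => ha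
  rw [hasDerivAt_iff_tendsto_slope_left_right]
  constructor
  · exact (h.comp hl).congr fun a => by rw [slope_comm, slope_def_field]; rfl
  · exact (h.comp hr).congr fun a => by rw [slope_def_field]; rfl

theorem tendsto_div_sub_of_hasDerivAt {Γ Γ' : ℝ × ℝ → ℝ} {x L : ℝ}
    (hΓ : ∀ᶠ p in 𝓝[{p | p.1 ≤ p.2}] (x, x), HasDerivAt (fun y => Γ (p.1, y)) (Γ' p) p.2)
    (hΓ' : Tendsto Γ' (𝓝[{p | p.1 ≤ p.2}] (x, x)) (𝓝 L))
    (hdiag : ∀ᶠ a in 𝓝 x, Γ (a, a) = 0) :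
    Tendsto (fun p : ℝ × ℝ => Γ p / (p.2 - p.1)) (𝓝[{p | p.1 < p.2}] (x, x)) (𝓝 L) := by
  rw [Metric.tendsto_nhds]
  intro ε hε
  have hdiag' : ∀ᶠ p in 𝓝[{p : ℝ × ℝ | p.1 ≤ p.2}] (x, x), Γ (p.1, p.1) = 0 :=
    (continuous_fst.tendsto (x, x) |>.mono_left nhdsWithin_le_nhds).eventually hdiag
  obtain ⟨δ, hδ, hball⟩ := Metric.mem_nhdsWithin_iff.mp
    (hΓ.and ((hΓ'.eventually (Metric.closedBall_mem_nhds L (half_pos hε))).and hdiag'))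
  filter_upwards [inter_mem_nhdsWithin _ (Metric.ball_mem_nhds (x, x) hδ)]
    with p ⟨(hlt : p.1 < p.2), hp⟩
  have hseg : ∀ y ∈ Icc p.1 p.2, (p.1, y) ∈ Metric.ball (x, x) δ ∩ {p | p.1 ≤ p.2} := by
    intro y hy
    refine ⟨?_, hy.1⟩
    simp only [Metric.mem_ball, Prod.dist_eq, Real.dist_eq, max_lt_iff, abs_sub_lt_iff] at hp ⊢
    exact ⟨hp.1, by constructor <;> linarith [hy.1, hy.2]⟩
  have hmvt := norm_image_sub_le_of_norm_deriv_le_segment'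
    (f := fun y => Γ (p.1, y) - L * y) (f' := fun y => Γ' (p.1, y) - L) (C := ε / 2)
    (fun y hy => (((hball (hseg y hy)).1.sub ((hasDerivAt_id y).const_mul L)).congr_deriv
      (by simp)).hasDerivWithinAt)
    (fun y hy => by simpa [← Real.dist_eq] using (hball (hseg y (Ico_subset_Icc_self hy))).2.1)
    p.2 (right_mem_Icc.2 hlt.le)
  have hzero : Γ (p.1, p.1) = 0 := (hball (hseg p.1 (left_mem_Icc.2 hlt.le))).2.2
  have hpos : 0 < p.2 - p.1 := sub_pos.2 hlt
  rw [Real.dist_eq, div_sub' hpos.ne', abs_div, abs_of_pos hpos, div_lt_iff₀ hpos]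
  simp only [hzero, Real.norm_eq_abs] at hmvt
  calc |Γ p - (p.2 - p.1) * L| = |Γ (p.1, p.2) - L * p.2 - (0 - L * p.1)| := by congr 1; ring
    _ ≤ ε / 2 * (p.2 - p.1) := hmvt
    _ < ε * (p.2 - p.1) := by nlinarith

theorem hasDerivAt_of_sub_mul_eq {f : ℝ → ℝ} {N R Γ A B : ℝ × ℝ → ℝ} {x : ℝ}
    (hinc : ∀ᶠ p in 𝓝[{p | p.1 ≤ p.2}] (x, x), (f p.2 - f p.1) * N p = R p * Γ p)
    (hN : ContinuousWithinAt N {p | p.1 ≤ p.2} (x, x)) (hN0 : N (x, x) ≠ 0)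
    (hR : ContinuousWithinAt R {p | p.1 ≤ p.2} (x, x))
    (hΓ : ContinuousWithinAt Γ {p | p.1 ≤ p.2} (x, x))
    (hΓ' : ∀ᶠ p in 𝓝[{p | p.1 ≤ p.2}] (x, x),
      HasDerivAt (fun y => Γ (p.1, y)) (A p + f p.1 * B p) p.2)
    (hdiag : ∀ᶠ a in 𝓝 x, Γ (a, a) = 0)
    (hA : ContinuousWithinAt A {p | p.1 ≤ p.2} (x, x))
    (hB : ContinuousWithinAt B {p | p.1 ≤ p.2} (x, x)) :
    HasDerivAt f (R (x, x) / N (x, x) * (A (x, x) + f x * B (x, x))) x := by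
  have hRN := hR.div hN hN0
  have hinc' : ∀ᶠ p in 𝓝[{p | p.1 ≤ p.2}] (x, x), f p.2 - f p.1 = R p / N p * Γ p := by
    filter_upwards [hinc, hN.eventually_ne hN0] with p hp hNp
    rw [div_mul_eq_mul_div, eq_div_iff hNp, hp]
  have hf : ContinuousAt f x := by
    refine continuousAt_of_tendsto_sub (Tendsto.congr' (hinc'.mono fun _ hp => hp.symm) ?_)
    simpa [hdiag.self_of_nhds] using hRN.tendsto.mul hΓ.tendsto
  have hlt : 𝓝[{p : ℝ × ℝ | p.1 < p.2}] (x, x) ≤ 𝓝[{p | p.1 ≤ p.2}] (x, x) :=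
    nhdsWithin_mono _ (ofPred_subset_ofPred.2 fun _ => le_of_lt)
  have hAB : Tendsto (fun p : ℝ × ℝ => A p + f p.1 * B p) (𝓝[{p | p.1 ≤ p.2}] (x, x))
      (𝓝 (A (x, x) + f x * B (x, x))) :=
    hA.tendsto.add
      (((hf.tendsto.comp (continuous_fst.tendsto (x, x))).mono_left nhdsWithin_le_nhds).mul hB)
  apply hasDerivAt_of_tendsto_div_sub
  refine ((hRN.tendsto.mono_left hlt).mul
    (tendsto_div_sub_of_hasDerivAt hΓ' hAB hdiag)).congr' ?_
  filter_upwards [hinc'.filter_mono hlt] with p hp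
  rw [hp, Pi.div_apply, mul_div_assoc]

theorem continuousWithinAt_integral_mul {F : ℝ × ℝ → ℝ} {w : ℝ → ℝ} {J : Set ℝ} {β x : ℝ}
    (hJ : IsOpen J) (hx : x ∈ J) (hxβ : x < β) (hw : Continuous w)
    (hF : ContinuousOn F {p | p.1 ∈ J ∧ p.1 ≤ p.2 ∧ p.2 ≤ β}) :
    ContinuousWithinAt (fun p : ℝ × ℝ => ∫ y in p.2..β, w y * (F (p.1, y) * F (p.2, y)))
      {p | p.1 ≤ p.2} (x, x) := by
  obtain ⟨c, d, -, hcd, hcdJ⟩ :=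
    exists_Icc_mem_subset_of_mem_nhds ((hJ.inter isOpen_Iio).mem_nhds ⟨hx, hxβ⟩)
  set K := {p : ℝ × ℝ | p.1 ∈ Icc c d ∧ p.1 ≤ p.2 ∧ p.2 ≤ β}
  have hK : IsClosed K := (isClosed_Icc.preimage continuous_fst).inter
    ((isClosed_le continuous_fst continuous_snd).inter
      (isClosed_le continuous_snd continuous_const))
  obtain ⟨G, hG⟩ := ContinuousMap.exists_restrict_eq hK
    ⟨K.domRestrict F, (hF.mono fun p hp => ⟨(hcdJ hp.1).1, hp.2⟩).domRestrict⟩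
  have hGF : ∀ p ∈ K, G p = F p := fun p hp => DFunLike.congr_fun hG ⟨p, hp⟩
  have hcont : Continuous fun p : ℝ × ℝ => ∫ y in p.2..β, w y * (G (p.1, y) * G (p.2, y)) := by
    simp_rw [integral_symm β]
    exact (continuous_parametric_intervalIntegral_of_continuous (by fun_prop) continuous_snd).neg
  refine hcont.continuousWithinAt.congr_of_eventuallyEq_of_mem ?_ (le_refl x)
  filter_upwards [self_mem_nhdsWithin, nhdsWithin_le_nhds (prod_mem_nhds hcd hcd)]
    with p (hp : p.1 ≤ p.2) ⟨h1, h2⟩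
  refine integral_congr fun y hy => ?_
  rw [uIcc_of_le (hcdJ h2).2.le] at hy
  simp only [hGF (p.1, y) ⟨h1, hp.trans hy.1, hy.2⟩, hGF (p.2, y) ⟨h2, hy.1, hy.2⟩]

theorem eventually_nhdsWithin_le_mem {J : Set ℝ} {x : ℝ} (hJ : IsOpen J) (hx : x ∈ J) :
    ∀ᶠ p in 𝓝[{p : ℝ × ℝ | p.1 ≤ p.2}] (x, x), p.1 ∈ J ∧ p.2 ∈ J ∧ p.1 ≤ p.2 := by
  filter_upwards [nhdsWithin_le_nhds (prod_mem_nhds (hJ.mem_nhds hx) (hJ.mem_nhds hx)),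
    self_mem_nhdsWithin] with p hp hle
  exact ⟨hp.1, hp.2, hle⟩

theorem hasDerivAt_exp_integral {g q : ℝ → ℝ} {a : ℝ} (hg : Continuous g)
    (hq : ∀ x, q x = Real.exp (∫ y in a..x, g y)) (x : ℝ) :
    HasDerivAt q (q x * g x) x := by
  rw [funext hq]
  exact (hg.integral_hasStrictDerivAt a x).hasDerivAt.exp

def SolvesSturmLiouvilleOn (b σ h : ℝ → ℝ) (θ μ : ℝ) (v : ℝ → ℝ) (s t : ℝ) : Prop :=
  ∀ x ∈ Icc s t, DifferentiableAt ℝ v x ∧ DifferentiableAt ℝ (deriv v) x ∧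
    (1 / 2) * σ x ^ 2 * deriv (deriv v) x + b x * deriv v x + θ * (h x - μ) * v x = 0

namespace SolvesSturmLiouvilleOn

variable {b σ h : ℝ → ℝ} {θ μ μ₁ μ₂ : ℝ} {v u₁ u₂ : ℝ → ℝ} {s t x : ℝ}

theorem mono_left (hv : SolvesSturmLiouvilleOn b σ h θ μ v s t) {s' : ℝ} (hs : s ≤ s') :
    SolvesSturmLiouvilleOn b σ h θ μ v s' t :=
  fun x hx => hv x ⟨hs.trans hx.1, hx.2⟩

theorem deriv_deriv_eq (hv : SolvesSturmLiouvilleOn b σ h θ μ v s t) (hσ0 : σ x ^ 2 ≠ 0)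
    (hx : x ∈ Icc s t) :
    deriv (deriv v) x = -2 * (b x * deriv v x + θ * (h x - μ) * v x) / σ x ^ 2 := by
  rw [eq_div_iff hσ0]
  linarith [(hv x hx).2.2]

theorem hasDerivAt_robin (hv : SolvesSturmLiouvilleOn b σ h θ μ v s t) (hσ0 : σ x ^ 2 ≠ 0)
    {k : ℝ → ℝ} (hk : DifferentiableAt ℝ k x) (hx : x ∈ Icc s t) :
    HasDerivAt (fun y => deriv v y + θ * k y * v y)
      (-2 * (b x * deriv v x + θ * (h x - μ) * v x) / σ x ^ 2
        + θ * (deriv k x * v x + k x * deriv v x)) x := by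
  refine ((hv x hx).2.1.hasDerivAt.add
    ((hk.hasDerivAt.const_mul θ).mul (hv x hx).1.hasDerivAt)).congr_deriv ?_
  rw [hv.deriv_deriv_eq hσ0 hx]
  ring

theorem lagrange_identity {q : ℝ → ℝ} (h₁ : SolvesSturmLiouvilleOn b σ h θ μ₁ u₁ s t)
    (h₂ : SolvesSturmLiouvilleOn b σ h θ μ₂ u₂ s t) (hst : s ≤ t) (hσ : Continuous σ)
    (hσ0 : ∀ x, σ x ^ 2 ≠ 0) (hq : ∀ x, HasDerivAt q (q x * (2 * b x / σ x ^ 2)) x) :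
    q t * (u₁ t * deriv u₂ t - u₂ t * deriv u₁ t)
        - q s * (u₁ s * deriv u₂ s - u₂ s * deriv u₁ s)
      = (μ₂ - μ₁) * ∫ x in s..t, 2 * θ * q x / σ x ^ 2 * (u₁ x * u₂ x) := by
  rw [← integral_const_mul]
  refine (integral_eq_sub_of_hasDerivAt
    (f := fun x => q x * (u₁ x * deriv u₂ x - u₂ x * deriv u₁ x)) (fun x hx => ?_) ?_).symm
  · rw [uIcc_of_le hst] at hx
    refine ((hq x).mul (((h₁ x hx).1.hasDerivAt.mul (h₂ x hx).2.1.hasDerivAt).sub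
      ((h₂ x hx).1.hasDerivAt.mul (h₁ x hx).2.1.hasDerivAt))).congr_deriv ?_
    rw [Pi.sub_apply, Pi.mul_apply, Pi.mul_apply, h₁.deriv_deriv_eq (hσ0 x) hx,
      h₂.deriv_deriv_eq (hσ0 x) hx]
    field_simp
    ring
  · have hqc : Continuous q := continuous_iff_continuousAt.2 fun x => (hq x).continuousAt
    have hu₁ : ContinuousOn u₁ (Icc s t) := fun x hx => (h₁ x hx).1.continuousAt.continuousWithinAt
    have hu₂ : ContinuousOn u₂ (Icc s t) := fun x hx => (h₂ x hx).1.continuousAt.continuousWithinAt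
    refine ContinuousOn.intervalIntegrable ?_
    rw [uIcc_of_le hst]
    exact continuousOn_const.mul
      (((continuous_const.mul hqc).div (hσ.pow 2) hσ0).continuousOn.mul (hu₁.mul hu₂))

theorem sub_mul_integral_eq_robin {q k : ℝ → ℝ} {κ : ℝ}
    (h₁ : SolvesSturmLiouvilleOn b σ h θ μ₁ u₁ s t)
    (h₂ : SolvesSturmLiouvilleOn b σ h θ μ₂ u₂ s t) (hst : s ≤ t) (hσ : Continuous σ)
    (hσ0 : ∀ x, σ x ^ 2 ≠ 0) (hq : ∀ x, HasDerivAt q (q x * (2 * b x / σ x ^ 2)) x)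
    (hbc₂ : θ * k s * u₂ s + deriv u₂ s = 0) (hbc₁' : θ * κ * u₁ t - deriv u₁ t = 0)
    (hbc₂' : θ * κ * u₂ t - deriv u₂ t = 0) :
    (μ₂ - μ₁) * ∫ x in s..t, 2 * θ * q x / σ x ^ 2 * (u₁ x * u₂ x)
      = q s * u₂ s * (deriv u₁ s + θ * k s * u₁ s) := by
  rw [← lagrange_identity h₁ h₂ hst hσ hσ0 hq]
  linear_combination (-(q t * u₁ t)) * hbc₂' + q t * u₂ t * hbc₁' - q s * u₁ s * hbc₂

end SolvesSturmLiouvilleOn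

theorem hasDerivAt_eigenvalue_of_robin {b σ h k q lam : ℝ → ℝ} {u : ℝ → ℝ → ℝ}
    {θ β κ x : ℝ} {J : Set ℝ} (hb : Continuous b) (hσ : Continuous σ)
    (hσ0 : ∀ y, σ y ^ 2 ≠ 0) (hh : Continuous h) (hk : ContDiff ℝ 1 k)
    (hq : ∀ y, HasDerivAt q (q y * (2 * b y / σ y ^ 2)) y)
    (hJ : IsOpen J) (hJβ : J ⊆ Iio β) (hx : x ∈ J)
    (hsol : ∀ α ∈ J, SolvesSturmLiouvilleOn b σ h θ (lam α) (u α) α β)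
    (hbc : ∀ α ∈ J, θ * k α * u α α + deriv (u α) α = 0)
    (hbcβ : ∀ α ∈ J, θ * κ * u α β - deriv (u α) β = 0)
    (hU : ContinuousWithinAt (fun p : ℝ × ℝ => u p.1 p.2) {p | p.1 ≤ p.2} (x, x))
    (hV : ContinuousWithinAt (fun p : ℝ × ℝ => deriv (u p.1) p.2) {p | p.1 ≤ p.2} (x, x))
    (hN : ContinuousWithinAt
      (fun p : ℝ × ℝ => ∫ y in p.2..β, 2 * θ * q y / σ y ^ 2 * (u p.1 y * u p.2 y))
      {p | p.1 ≤ p.2} (x, x))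
    (hN0 : ∫ y in x..β, 2 * θ * q y / σ y ^ 2 * (u x y * u x y) ≠ 0) :
    HasDerivAt lam (q x * u x x / (∫ y in x..β, 2 * θ * q y / σ y ^ 2 * (u x y * u x y)) *
      (-2 * (b x * deriv (u x) x + θ * (h x - lam x) * u x x) / σ x ^ 2
        + θ * (deriv k x * u x x + k x * deriv (u x) x))) x := by
  have hev := eventually_nhdsWithin_le_mem hJ hx
  have hsnd {g : ℝ → ℝ} (hg : Continuous g) :
      ContinuousWithinAt (fun p : ℝ × ℝ => g p.2) {p | p.1 ≤ p.2} (x, x) :=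
    (hg.comp continuous_snd).continuousWithinAt
  have hqc : Continuous q := continuous_iff_continuousAt.2 fun y => (hq y).continuousAt
  have hk' : Continuous (deriv k) := hk.continuous_deriv le_rfl
  refine (hasDerivAt_of_sub_mul_eq
    (R := fun p => q p.2 * u p.2 p.2)
    (Γ := fun p => deriv (u p.1) p.2 + θ * k p.2 * u p.1 p.2)
    (A := fun p => -2 * (b p.2 * deriv (u p.1) p.2 + θ * h p.2 * u p.1 p.2) / σ p.2 ^ 2
      + θ * (deriv k p.2 * u p.1 p.2 + k p.2 * deriv (u p.1) p.2))
    (B := fun p => 2 * θ * u p.1 p.2 / σ p.2 ^ 2) ?_ hN hN0 ?_ ?_ ?_ ?_ ?_ ?_).congr_deriv ?_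
  · filter_upwards [hev] with p ⟨h1, h2, h12⟩
    exact ((hsol p.1 h1).mono_left h12).sub_mul_integral_eq_robin (hsol p.2 h2) (hJβ h2).le
      hσ hσ0 hq (hbc p.2 h2) (hbcβ p.1 h1) (hbcβ p.2 h2)
  · have hUdiag : ContinuousWithinAt (fun p : ℝ × ℝ => u p.2 p.2) {p | p.1 ≤ p.2} (x, x) :=
      hU.comp (f := fun p : ℝ × ℝ => (p.2, p.2)) (x := (x, x))
        (continuous_snd.prodMk continuous_snd).continuousWithinAt fun p _ => le_refl p.2
    exact (hsnd hqc).mul hUdiag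
  · exact hV.add ((hsnd (continuous_const.mul hk.continuous)).mul hU)
  · filter_upwards [hev] with p ⟨h1, h2, h12⟩
    refine ((hsol p.1 h1).hasDerivAt_robin (hσ0 _) (hk.differentiable one_ne_zero p.2)
      ⟨h12, (hJβ h2).le⟩).congr_deriv ?_
    ring
  · filter_upwards [hJ.mem_nhds hx] with a ha
    linarith [hbc a ha]
  · exact ((continuousWithinAt_const.mul (((hsnd hb).mul hV).add
      ((hsnd (continuous_const.mul hh)).mul hU))).div (hsnd (hσ.pow 2)) (hσ0 _)).add
      (continuousWithinAt_const.mul (((hsnd hk').mul hU).add ((hsnd hk.continuous).mul hV)))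
  · exact (continuousWithinAt_const.mul hU).div (hsnd (hσ.pow 2)) (hσ0 _)
  · ring

theorem eigenvalue_derivative_left_boundary_general
    (θ β : ℝ)
    (b σ h kp km : ℝ → ℝ)
    (hb : ContDiff ℝ 1 b) (hσ : ContDiff ℝ 1 σ)
    (hσpos : ∀ x : ℝ, 0 < (σ x) ^ 2)
    (hh : ContDiff ℝ 1 h)
    (hkp : ContDiff ℝ 2 kp)
    (q : ℝ → ℝ)
    (hq : ∀ x : ℝ, q x = Real.exp (∫ y in (0 : ℝ)..x, 2 * b y / (σ y) ^ 2))
    (Hm : ℝ → ℝ)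
    (hHm : ∀ x, Hm x = (1 / 2) * θ * (σ x) ^ 2 * (kp x) ^ 2
      - (1 / 2) * (σ x) ^ 2 * deriv kp x - b x * kp x + h x)
    (J : Set ℝ) (hJopen : IsOpen J) (hJβ : J ⊆ Iio β)
    (lam : ℝ → ℝ) (u : ℝ → ℝ → ℝ)
    (hu1 : ∀ α ∈ J, ∀ x ∈ Icc α β, DifferentiableAt ℝ (u α) x)
    (hu2 : ∀ α ∈ J, ∀ x ∈ Icc α β, DifferentiableAt ℝ (deriv (u α)) x)
    (hODE : ∀ α ∈ J, ∀ x ∈ Icc α β,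
      (1 / 2) * (σ x) ^ 2 * deriv (deriv (u α)) x + b x * deriv (u α) x
        + θ * (h x - lam α) * u α x = 0)
    (hbcα : ∀ α ∈ J, θ * kp α * u α α + deriv (u α) α = 0)
    (hbcβ : ∀ α ∈ J, θ * km β * u α β - deriv (u α) β = 0)
    (hnorm : ∀ α ∈ J,
      ∫ y in α..β, (2 * θ * q y / (σ y) ^ 2) * (u α y) ^ 2 = 1)
    (hucont : ContinuousOn (fun p : ℝ × ℝ => u p.1 p.2)
      {p : ℝ × ℝ | p.1 ∈ J ∧ p.1 ≤ p.2 ∧ p.2 ≤ β})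
    (hu'cont : ContinuousOn (fun p : ℝ × ℝ => deriv (u p.1) p.2)
      {p : ℝ × ℝ | p.1 ∈ J ∧ p.1 ≤ p.2 ∧ p.2 ≤ β}) :
    ∀ α ∈ J, HasDerivAt lam
      ((2 * θ * q α / (σ α) ^ 2) * (u α α) ^ 2 * (lam α - Hm α)) α := by
  intro α₀ hα₀
  have hσ0 : ∀ x, σ x ^ 2 ≠ 0 := fun x => (hσpos x).ne'
  have hq' := hasDerivAt_exp_integral (by fun_prop (disch := exact hσ0 _)) hq
  have hqc : Continuous q := continuous_iff_continuousAt.2 fun x => (hq' x).continuousAt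
  have hS : {p : ℝ × ℝ | p.1 ∈ J ∧ p.1 ≤ p.2 ∧ p.2 ≤ β} ∈ 𝓝[{p | p.1 ≤ p.2}] (α₀, α₀) :=
    (eventually_nhdsWithin_le_mem hJopen hα₀).mono fun p hp => ⟨hp.1, hp.2.2, (hJβ hp.2.1).le⟩
  have hmem : (α₀, α₀) ∈ {p : ℝ × ℝ | p.1 ∈ J ∧ p.1 ≤ p.2 ∧ p.2 ≤ β} :=
    ⟨hα₀, le_rfl, (hJβ hα₀).le⟩
  have hN1 : ∫ y in α₀..β, 2 * θ * q y / σ y ^ 2 * (u α₀ y * u α₀ y) = 1 := by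
    rw [← hnorm α₀ hα₀]
    simp only [sq]
  refine (hasDerivAt_eigenvalue_of_robin hb.continuous hσ.continuous hσ0 hh.continuous
    (hkp.of_le one_le_two) hq' hJopen hJβ hα₀
    (fun α hα x hx => ⟨hu1 α hα x hx, hu2 α hα x hx, hODE α hα x hx⟩)
    hbcα hbcβ ((hucont _ hmem).mono_of_mem_nhdsWithin hS)
    ((hu'cont _ hmem).mono_of_mem_nhdsWithin hS)
    (continuousWithinAt_integral_mul hJopen hα₀ (hJβ hα₀)
      (by fun_prop (disch := exact hσ0 _)) hucont)
    (hN1 ▸ one_ne_zero)).congr_deriv ?_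
  have hd : deriv (u α₀) α₀ = -(θ * kp α₀ * u α₀ α₀) := by linarith [hbcα α₀ hα₀]
  have hσα₀ : σ α₀ ≠ 0 := fun h0 => hσ0 α₀ (by rw [h0]; ring)
  rw [hN1, hd, hHm]
  field_simp
  ring

/-- formula (3.11) of the paper's Lemma 3.1 for the partial
derivative of the principal eigenvalue with respect to the left boundary
point. -/
theorem eigenvalue_derivative_left_boundary
    (θ β : ℝ) (hθ : 0 < θ)
    (b σ h kp km : ℝ → ℝ)
    (hb : ContDiff ℝ 1 b) (hσ : ContDiff ℝ 1 σ)
    (hσpos : ∀ x : ℝ, 0 < (σ x) ^ 2)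
    (hh : ContDiff ℝ 1 h) (hhpos : ∀ x : ℝ, 0 < h x)
    (hkp : ContDiff ℝ 2 kp) (hkm : ContDiff ℝ 2 km)
    (hkppos : ∀ x : ℝ, 0 < kp x) (hkmpos : ∀ x : ℝ, 0 < km x)
    (q : ℝ → ℝ)
    (hq : ∀ x : ℝ, q x = Real.exp (∫ y in (0 : ℝ)..x, 2 * b y / (σ y) ^ 2))
    (Hm : ℝ → ℝ)
    (hHm : ∀ x, Hm x = (1 / 2) * θ * (σ x) ^ 2 * (kp x) ^ 2
      - (1 / 2) * (σ x) ^ 2 * deriv kp x - b x * kp x + h x)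
    (J : Set ℝ) (hJopen : IsOpen J) (hJconn : J.OrdConnected) (hJβ : J ⊆ Iio β)
    (lam : ℝ → ℝ) (u : ℝ → ℝ → ℝ)
    (hu1 : ∀ α ∈ J, ∀ x ∈ Icc α β, DifferentiableAt ℝ (u α) x)
    (hu2 : ∀ α ∈ J, ∀ x ∈ Icc α β, DifferentiableAt ℝ (deriv (u α)) x)
    (hu2c : ∀ α ∈ J, ContinuousOn (deriv (deriv (u α))) (Icc α β))
    (hupos : ∀ α ∈ J, ∀ x ∈ Icc α β, 0 < u α x)
    (hODE : ∀ α ∈ J, ∀ x ∈ Icc α β,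
      (1 / 2) * (σ x) ^ 2 * deriv (deriv (u α)) x + b x * deriv (u α) x
        + θ * (h x - lam α) * u α x = 0)
    (hbcα : ∀ α ∈ J, θ * kp α * u α α + deriv (u α) α = 0)
    (hbcβ : ∀ α ∈ J, θ * km β * u α β - deriv (u α) β = 0)
    (hnorm : ∀ α ∈ J,
      ∫ y in α..β, (2 * θ * q y / (σ y) ^ 2) * (u α y) ^ 2 = 1)
    (hucont : ContinuousOn (fun p : ℝ × ℝ => u p.1 p.2)
      {p : ℝ × ℝ | p.1 ∈ J ∧ p.1 ≤ p.2 ∧ p.2 ≤ β})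
    (hu'cont : ContinuousOn (fun p : ℝ × ℝ => deriv (u p.1) p.2)
      {p : ℝ × ℝ | p.1 ∈ J ∧ p.1 ≤ p.2 ∧ p.2 ≤ β}) :
    ∀ α ∈ J, HasDerivAt lam
      ((2 * θ * q α / (σ α) ^ 2) * (u α α) ^ 2 * (lam α - Hm α)) α :=
  eigenvalue_derivative_left_boundary_general θ β b σ h kp km hb hσ hσpos hh hkp q hq Hm hHm J
    hJopen hJβ lam u hu1 hu2 hODE hbcα hbcβ hnorm hucont hu'cont
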